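/- arXiv:1401.1086 — 2 statements merged into one kernel-verified Lean document; each statement's English description precedes it below -/
import Mathlib

section
/- In the example network (the path a — b — c with V_src = {a,c}, V_ld = {b}, α = 1), with defense V_d = {b} one has p(∅,{b}) = 0, p({a},{b}) = 0, p({c},{b}) = 0 and p({a,c},{b}) = 1. Hence p({a,c},{b}) − p({a},{b}) > p({c},{b}) − p(∅,{b}), so the map V_a ↦ p(V_a,{b}) is not submodular. -/
open scoped Classical

noncomputable section

variable {V : Type*} [Fintype V] [DecidableEq V]

/-- The number of shortest paths between `s` and `t` in `G` (σ_G(s,t)). -/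
def numSP (G : SimpleGraph V) (s t : V) : ℕ :=
  Nat.card {w : G.Walk s t // w.length = G.dist s t}

/-- The number of shortest paths between `s` and `t` in `G` passing through edge `e`
(σ_G(s,t | e)). -/
def numSPthru (G : SimpleGraph V) (s t : V) (e : Sym2 V) : ℕ :=
  Nat.card {w : G.Walk s t // w.length = G.dist s t ∧ e ∈ w.edges}

/-- `N_G(t)`: the vertices of `Vsrc \ {t}` reachable from `t` in `G` at minimum distance
from `t`. -/
def nearestSources (Vsrc : Finset V) (G : SimpleGraph V) (t : V) : Finset V :=
  ((Vsrc.erase t).filter (fun s => G.Reachable t s)).filter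
    (fun s => ∀ s' ∈ (Vsrc.erase t).filter (fun s'' => G.Reachable t s''),
      G.dist t s ≤ G.dist t s')

/-- The load of edge `e` in `G`:
`load_G(e) = Σ_{t ∈ Vld} Σ_{s ∈ N_G(t)} σ_G(s,t|e) / (|N_G(t)|·σ_G(s,t))`. -/
def eload (Vsrc Vld : Finset V) (G : SimpleGraph V) (e : Sym2 V) : ℝ :=
  ∑ t ∈ Vld, ∑ s ∈ nearestSources Vsrc G t,
    (numSPthru G s t e : ℝ) / (((nearestSources Vsrc G t).card : ℝ) * (numSP G s t : ℝ))

/-- The failure operator: removes every edge whose current load exceeds its capacity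
`c_e = (1+α)·load_{G₀}(e)`. -/
def Fop (Vsrc Vld : Finset V) (G0 : SimpleGraph V) (α : ℝ) (G : SimpleGraph V) :
    SimpleGraph V where
  Adj u v := G.Adj u v ∧ eload Vsrc Vld G s(u, v) ≤ (1 + α) * eload Vsrc Vld G0 s(u, v)
  symm := by
    constructor
    intro u v h
    refine ⟨h.1.symm, ?_⟩
    rw [Sym2.eq_swap]
    exact h.2
  loopless := ⟨fun v h => G.loopless.irrefl v h.1⟩

/-- `F*(G)`: the fixed point reached by iterating the failure operator (reached after at
most `|E|+1 ≤ (card V)^2` applications, since each non-trivial application removes an edge). -/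
def Fstar (Vsrc Vld : Finset V) (G0 : SimpleGraph V) (α : ℝ) (G : SimpleGraph V) :
    SimpleGraph V :=
  (Fop Vsrc Vld G0 α)^[Fintype.card V ^ 2] G

/-- `G − S`: the (induced) subgraph obtained by deleting the vertices of `S`. -/
def deleteVerts (G : SimpleGraph V) (S : Finset V) : SimpleGraph V where
  Adj u v := G.Adj u v ∧ u ∉ S ∧ v ∉ S
  symm := ⟨fun u v h => ⟨h.1.symm, h.2.2, h.2.1⟩⟩
  loopless := ⟨fun v h => G.loopless.irrefl v h.1⟩

/-- `disc(G)`: the number of load nodes from which no source (other than itself) is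
reachable in `G`. -/
def disc (Vsrc Vld : Finset V) (G : SimpleGraph V) : ℕ :=
  (Vld.filter (fun t => ∀ s ∈ Vsrc, s ≠ t → ¬ G.Reachable t s)).card

/-- The payoff `p(V_a,V_d) = disc(F*(G₀ − (V_a \ V_d)))`. -/
def payoff (Vsrc Vld : Finset V) (G0 : SimpleGraph V) (α : ℝ) (Va Vd : Finset V) : ℕ :=
  disc Vsrc Vld (Fstar Vsrc Vld G0 α (deleteVerts G0 (Va \ Vd)))

/-- `f` is submodular: adding an element to a larger set yields a smaller increment. -/
def IsSubmodular {β : Type*} [DecidableEq β] (f : Finset β → ℤ) : Prop :=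
  ∀ ⦃S1 S2 : Finset β⦄, S1 ⊆ S2 → ∀ s ∉ S2,
    f (insert s S2) - f S2 ≤ f (insert s S1) - f S1

/-- `f` is supermodular: adding an element to a larger set yields a larger increment. -/
def IsSupermodular {β : Type*} [DecidableEq β] (f : Finset β → ℤ) : Prop :=
  ∀ ⦃S1 S2 : Finset β⦄, S1 ⊆ S2 → ∀ s ∉ S2,
    f (insert s S1) - f S1 ≤ f (insert s S2) - f S2

/-!
Attacking one source `a` of the path `a — b — c` leaves `b` with a single nearest source, so the
whole demand of `b` moves onto the surviving edge: its load doubles from `1/2` to `1`, which is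
exactly its capacity `(1 + 1) · 1/2`. Hence nothing fails and `b` stays connected. Attacking both
sources removes every edge and disconnects `b`. So adding `c` to the attack is worth more once `a`
is attacked than before, against submodularity.
-/

open SimpleGraph Finset

section

variable {W : Type*} {G : SimpleGraph W} {s t : W}

theorem SimpleGraph.Adj.eq_toWalk_of_length_eq_one (h : G.Adj s t) {p : G.Walk s t}
    (hp : p.length = 1) : p = h.toWalk := by
  cases p with
  | nil => simp at hp
  | cons _ q =>
    cases q with
    | nil => rfl
    | cons _ _ => simp at hp

lemma eq_toWalk_of_length_eq_dist (h : G.Adj s t) {w : G.Walk s t}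
    (hw : w.length = G.dist s t) : w = h.toWalk :=
  h.eq_toWalk_of_length_eq_one (hw.trans (dist_eq_one_iff_adj.mpr h))

lemma numSP_of_adj (h : G.Adj s t) : numSP G s t = 1 :=
  Nat.card_eq_one_iff_exists.mpr
    ⟨⟨h.toWalk, by simp [dist_eq_one_iff_adj.mpr h]⟩,
      fun w => Subtype.ext (eq_toWalk_of_length_eq_dist h w.2)⟩

lemma numSPthru_of_adj (h : G.Adj s t) (e : Sym2 W) :
    numSPthru G s t e = if e = s(s, t) then 1 else 0 := by
  split_ifs with he
  · subst he
    exact Nat.card_eq_one_iff_exists.mpr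
      ⟨⟨h.toWalk, by simp [dist_eq_one_iff_adj.mpr h]⟩,
        fun w => Subtype.ext (eq_toWalk_of_length_eq_dist h w.2.1)⟩
  · refine @Nat.card_of_isEmpty _ ⟨fun ⟨w, hw, hew⟩ => he ?_⟩
    simpa [eq_toWalk_of_length_eq_dist h hw] using hew

lemma deleteVerts_empty : deleteVerts G ∅ = G := by
  ext u v
  simp [deleteVerts]

lemma not_reachable_deleteVerts {S : Finset W} {u x : W} (hx : x ∈ S) (hux : u ≠ x) :
    ¬(deleteVerts G S).Reachable u x := by
  rintro ⟨w⟩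
  cases w.reverse with
  | nil => exact hux rfl
  | cons h _ => exact h.2.1 hx

end

section

variable {Vsrc Vld : Finset V} {G G0 : SimpleGraph V} {α : ℝ} {s t : V}

lemma nearestSources_eq_erase_of_forall_adj (h : ∀ s ∈ Vsrc.erase t, G.Adj t s) :
    nearestSources Vsrc G t = Vsrc.erase t := by
  have hreach : (Vsrc.erase t).filter (G.Reachable t) = Vsrc.erase t :=
    filter_eq_self.mpr fun s hs => (h s hs).reachable
  rw [nearestSources, hreach, filter_eq_self]
  intro s hs s' hs'
  rw [dist_eq_one_iff_adj.mpr (h s hs), dist_eq_one_iff_adj.mpr (h s' hs')]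

lemma nearestSources_eq_singleton (hs : s ∈ Vsrc) (hst : G.Adj t s)
    (h : ∀ s' ∈ Vsrc, s' ≠ s → s' ≠ t → ¬G.Reachable t s') :
    nearestSources Vsrc G t = {s} := by
  have hreach : (Vsrc.erase t).filter (G.Reachable t) = {s} := by
    ext s'
    simp only [mem_filter, mem_erase, mem_singleton]
    refine ⟨fun ⟨⟨hs't, hs'⟩, hr⟩ => by_contra fun hne => h s' hs' hne hs't hr, ?_⟩
    rintro rfl
    exact ⟨⟨hst.ne.symm, hs⟩, hst.reachable⟩
  rw [nearestSources, hreach, filter_eq_self]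
  intro s₁ hs₁ s₂ hs₂
  rw [mem_singleton.mp hs₁, mem_singleton.mp hs₂]

lemma eload_singleton_of_forall_adj (hN : ∀ s' ∈ nearestSources Vsrc G t, G.Adj s' t)
    (hs : s ∈ nearestSources Vsrc G t) :
    eload Vsrc {t} G s(s, t) = 1 / #(nearestSources Vsrc G t) := by
  rw [eload, sum_singleton, sum_eq_single s]
  · rw [numSPthru_of_adj (hN s hs), if_pos rfl, numSP_of_adj (hN s hs)]
    simp
  · intro s' hs' hne
    rw [numSPthru_of_adj (hN s' hs'), if_neg (fun he => hne (Sym2.congr_left.mp he).symm)]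
    simp
  · exact fun h => (h hs).elim

lemma eload_nonneg (Vsrc Vld : Finset V) (G : SimpleGraph V) (e : Sym2 V) :
    0 ≤ eload Vsrc Vld G e :=
  sum_nonneg fun _ _ => sum_nonneg fun _ _ => by positivity

lemma Fop_eq_self
    (h : ∀ u v, G.Adj u v → eload Vsrc Vld G s(u, v) ≤ (1 + α) * eload Vsrc Vld G0 s(u, v)) :
    Fop Vsrc Vld G0 α G = G := by
  ext u v
  exact ⟨And.left, fun huv => ⟨huv, h u v huv⟩⟩

lemma Fop_self (hα : 0 ≤ α) : Fop Vsrc Vld G0 α G0 = G0 :=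
  Fop_eq_self fun u v _ => le_mul_of_one_le_left (eload_nonneg _ _ _ _) (by linarith)

lemma Fop_bot : Fop Vsrc Vld G0 α ⊥ = ⊥ :=
  Fop_eq_self fun _ _ h => h.elim

lemma Fstar_eq_self (h : Fop Vsrc Vld G0 α G = G) : Fstar Vsrc Vld G0 α G = G :=
  Function.iterate_fixed h _

lemma disc_singleton_eq_zero (hs : s ∈ Vsrc) (hst : s ≠ t) (h : G.Reachable t s) :
    disc Vsrc {t} G = 0 := by
  simpa [disc] using ⟨s, hs, hst, h⟩

lemma disc_bot : disc Vsrc Vld ⊥ = #Vld := by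
  simp [disc, reachable_bot, eq_comm]

lemma payoff_empty (Vd : Finset V) (hα : 0 ≤ α) :
    payoff Vsrc Vld G0 α ∅ Vd = disc Vsrc Vld G0 := by
  rw [payoff, empty_sdiff, deleteVerts_empty, Fstar_eq_self (Fop_self hα)]

lemma payoff_of_deleteVerts_eq_bot {Va Vd : Finset V} (h : deleteVerts G0 (Va \ Vd) = ⊥) :
    payoff Vsrc Vld G0 α Va Vd = #Vld := by
  rw [payoff, h, Fstar_eq_self Fop_bot, disc_bot]

end

lemma pathGraph_three_adj {u v : Fin 3} : (pathGraph 3).Adj u v ↔ u ≠ v ∧ (u = 1 ∨ v = 1) := by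
  rw [pathGraph_adj]
  fin_cases u <;> fin_cases v <;> decide

lemma eload_pathGraph_three {s : Fin 3} (hs : s ∈ ({0, 2} : Finset (Fin 3))) :
    eload {0, 2} {1} (pathGraph 3) s(s, 1) = 1 / 2 := by
  have hadj : ∀ s' ∈ ({0, 2} : Finset (Fin 3)), (pathGraph 3).Adj s' 1 := by
    simp only [pathGraph_three_adj]
    decide
  have hN : nearestSources {0, 2} (pathGraph 3) 1 = {0, 2} :=
    nearestSources_eq_erase_of_forall_adj (fun s' hs' => (hadj s' (mem_of_mem_erase hs')).symm)
      |>.trans (by decide)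
  rw [eload_singleton_of_forall_adj (by rwa [hN]) (by rwa [hN]), hN]
  simp

lemma deleteVerts_pathGraph_three_eq_bot : deleteVerts (pathGraph 3) {0, 2} = ⊥ := by
  ext u v
  simp only [deleteVerts, pathGraph_three_adj, bot_adj, iff_false]
  fin_cases u <;> fin_cases v <;> decide

lemma deleteVerts_pathGraph_three_adj_iff {x y u v : Fin 3} (hx : x ≠ 1) (hy : y ≠ 1)
    (hxy : x ≠ y) : (deleteVerts (pathGraph 3) {x}).Adj u v ↔ s(u, v) = s(y, 1) := by
  simp only [deleteVerts, pathGraph_three_adj, mem_singleton, Sym2.eq_iff]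
  omega

lemma payoff_pathGraph_three_attack_leaf {x y : Fin 3} (hx : x ≠ 1) (hy : y ≠ 1) (hxy : x ≠ y) :
    payoff {0, 2} {1} (pathGraph 3) 1 {x} {1} = 0 := by
  set G := deleteVerts (pathGraph 3) {x}
  have hadj {u v : Fin 3} : G.Adj u v ↔ s(u, v) = s(y, 1) :=
    deleteVerts_pathGraph_three_adj_iff hx hy hxy
  have hy1 : G.Adj y 1 := hadj.mpr rfl
  have hysrc : y ∈ ({0, 2} : Finset (Fin 3)) := by
    simp only [mem_insert, mem_singleton]
    omega
  have hN : nearestSources {0, 2} G 1 = {y} := by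
    refine nearestSources_eq_singleton hysrc hy1.symm fun s _ hsy hs1 => ?_
    obtain rfl : s = x := by omega
    exact not_reachable_deleteVerts (mem_singleton_self s) hx.symm
  have hload : eload {0, 2} {1} G s(y, 1) = 1 := by
    rw [eload_singleton_of_forall_adj (by simp [hN, hy1]) (by simp [hN]), hN]
    simp
  have hF : Fop {0, 2} {1} (pathGraph 3) 1 G = G := Fop_eq_self fun u v huv => by
    rw [hadj.mp huv, hload, eload_pathGraph_three hysrc]
    norm_num
  rw [payoff, sdiff_eq_self_of_disjoint (disjoint_singleton.mpr hx), Fstar_eq_self hF]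
  exact disc_singleton_eq_zero hysrc hy hy1.symm.reachable

/-- In the path `a — b — c` (vertices `0,1,2` of `Fin 3`) with `V_src = {a,c}`,
`V_ld = {b}` and `α = 1`, with defense `V_d = {b}` one has `p(∅,{b}) = 0`,
`p({a},{b}) = 0`, `p({c},{b}) = 0` and `p({a,c},{b}) = 1`; hence
`p({a,c},{b}) − p({a},{b}) > p({c},{b}) − p(∅,{b})`, so
`V_a ↦ p(V_a,{b})` is not submodular. -/
theorem path_example_not_submodular_in_attack :
    payoff ({0, 2} : Finset (Fin 3)) ({1} : Finset (Fin 3)) (SimpleGraph.pathGraph 3) 1 ∅ {1} = 0 ∧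
    payoff ({0, 2} : Finset (Fin 3)) ({1} : Finset (Fin 3)) (SimpleGraph.pathGraph 3) 1 {0} {1} = 0 ∧
    payoff ({0, 2} : Finset (Fin 3)) ({1} : Finset (Fin 3)) (SimpleGraph.pathGraph 3) 1 {2} {1} = 0 ∧
    payoff ({0, 2} : Finset (Fin 3)) ({1} : Finset (Fin 3)) (SimpleGraph.pathGraph 3) 1 {0, 2} {1} = 1 ∧
    ((payoff ({0, 2} : Finset (Fin 3)) ({1} : Finset (Fin 3)) (SimpleGraph.pathGraph 3) 1 {2} {1} : ℤ) - (payoff ({0, 2} : Finset (Fin 3)) ({1} : Finset (Fin 3)) (SimpleGraph.pathGraph 3) 1 ∅ {1} : ℤ) <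
      (payoff ({0, 2} : Finset (Fin 3)) ({1} : Finset (Fin 3)) (SimpleGraph.pathGraph 3) 1 {0, 2} {1} : ℤ) - (payoff ({0, 2} : Finset (Fin 3)) ({1} : Finset (Fin 3)) (SimpleGraph.pathGraph 3) 1 {0} {1} : ℤ)) ∧
    ¬ IsSubmodular (fun Va : Finset (Fin 3) => (payoff ({0, 2} : Finset (Fin 3)) ({1} : Finset (Fin 3)) (SimpleGraph.pathGraph 3) 1 Va {1} : ℤ)) := by
  have p0 : payoff {0, 2} {1} (pathGraph 3) 1 ∅ {1} = 0 := by
    rw [payoff_empty _ zero_le_one]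
    exact disc_singleton_eq_zero (s := 0) (by simp) (by decide)
      (pathGraph_three_adj.mpr (by decide)).reachable
  have pA := payoff_pathGraph_three_attack_leaf (x := 0) (y := 2) (by decide) (by decide) (by decide)
  have pC := payoff_pathGraph_three_attack_leaf (x := 2) (y := 0) (by decide) (by decide) (by decide)
  have pAC : payoff {0, 2} {1} (pathGraph 3) 1 {0, 2} {1} = 1 :=
    payoff_of_deleteVerts_eq_bot <| by
      rw [show ({0, 2} : Finset (Fin 3)) \ {1} = {0, 2} by decide]
      exact deleteVerts_pathGraph_three_eq_bot
  refine ⟨p0, pA, pC, pAC, by simp [p0, pA, pC, pAC], fun h => ?_⟩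
  have := h (empty_subset {0}) 2 (by decide)
  simp [p0, pA, pC, pAC, pair_comm (2 : Fin 3) 0] at this

end
end

section
/- In the cascading-failure model, suppose G₀ is bipartite with the two sides of the bipartition exactly V_src and V_ld (every edge joins a source to a load, and V_src, V_ld partition the vertex set). Then for every graph G obtained from G₀ by deleting vertices and/or edges and every edge {h,s} of G with h ∈ V_src and s ∈ V_ld, load_G({h,s}) = 1/deg_G(s), where deg_G(s) is the degree of the load endpoint s in G. -/
open scoped Classical

noncomputable section

variable {V : Type*} [Fintype V] [DecidableEq V]

/-! Every neighbour of a load node is a source at distance one, so the nearest sources of a load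
node are exactly its neighbours, each joined to it by a unique shortest path: the edge itself.
A load node thus sends `1/deg` along each incident edge and nothing elsewhere, and an edge `{h,s}`
receives load only from its load endpoint `s`, since the source `h` is not a load. -/

namespace SimpleGraph

variable {W : Type*} {G : SimpleGraph W} {a b : W}

lemma Adj.eq_toWalk_of_length_eq_one_s16 (hab : G.Adj a b) {w : G.Walk a b} (hw : w.length = 1) :
    w = hab.toWalk :=
  Walk.eq_of_length_le_one hw.le (by simp)

lemma Adj.numSP_eq_one (hab : G.Adj a b) : numSP G a b = 1 := by
  rw [numSP, dist_eq_one_iff_adj.mpr hab, Nat.card_eq_one_iff_unique]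
  exact ⟨⟨fun w w' => Subtype.ext <|
      (hab.eq_toWalk_of_length_eq_one_s16 w.2).trans (hab.eq_toWalk_of_length_eq_one_s16 w'.2).symm⟩,
    ⟨⟨hab.toWalk, by simp⟩⟩⟩

lemma Adj.numSPthru_eq (hab : G.Adj a b) (e : Sym2 W) :
    numSPthru G a b e = if e = s(a, b) then 1 else 0 := by
  rw [numSPthru, dist_eq_one_iff_adj.mpr hab]
  split_ifs with he
  · rw [Nat.card_eq_one_iff_unique]
    exact ⟨⟨fun w w' => Subtype.ext <|
        (hab.eq_toWalk_of_length_eq_one_s16 w.2.1).trans (hab.eq_toWalk_of_length_eq_one_s16 w'.2.1).symm⟩,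
      ⟨⟨hab.toWalk, by simp [he]⟩⟩⟩
  · have : IsEmpty {w : G.Walk a b // w.length = 1 ∧ e ∈ w.edges} :=
      ⟨fun ⟨w, hw, hew⟩ => he (by simpa [hab.eq_toWalk_of_length_eq_one_s16 hw] using hew)⟩
    exact Nat.card_of_isEmpty

end SimpleGraph

open SimpleGraph

section

variable {Vsrc Vld : Finset V} {G : SimpleGraph V}

lemma nearestSources_eq_neighborFinset {t : V} (ht : ∀ u, G.Adj t u → u ∈ Vsrc) :
    nearestSources Vsrc G t = G.neighborFinset t := by
  ext u
  simp only [nearestSources, Finset.mem_filter, Finset.mem_erase, mem_neighborFinset]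
  constructor
  · rintro ⟨⟨⟨hut, -⟩, htu⟩, hmin⟩
    obtain ⟨w⟩ := htu
    cases w with
    | nil => exact absurd rfl hut
    | @cons _ v _ htv wvu =>
      have hle := hmin v ⟨⟨htv.ne', ht v htv⟩, htv.reachable⟩
      have hpos : G.dist t u ≠ 0 := fun h0 =>
        hut ((Walk.cons htv wvu).reachable.dist_eq_zero_iff.mp h0).symm
      rw [dist_eq_one_iff_adj.mpr htv] at hle
      exact dist_eq_one_iff_adj.mp (by omega)
  · intro htu
    refine ⟨⟨⟨htu.ne', ht u htu⟩, htu.reachable⟩, fun v ⟨⟨hvt, _⟩, htv⟩ => ?_⟩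
    rw [dist_eq_one_iff_adj.mpr htu, Nat.one_le_iff_ne_zero]
    exact fun h0 => hvt (htv.dist_eq_zero_iff.mp h0).symm

lemma sum_nearestSources_load_eq {t : V} (ht : ∀ u, G.Adj t u → u ∈ Vsrc) (e : Sym2 V) :
    ∑ w ∈ nearestSources Vsrc G t,
        (numSPthru G w t e : ℝ) / (((nearestSources Vsrc G t).card : ℝ) * (numSP G w t : ℝ)) =
      ∑ w ∈ G.neighborFinset t, if e = s(w, t) then 1 / (G.degree t : ℝ) else 0 := by
  rw [nearestSources_eq_neighborFinset ht, card_neighborFinset_eq_degree]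
  refine Finset.sum_congr rfl fun w hw => ?_
  have hwt : G.Adj w t := ((mem_neighborFinset _ _ _).mp hw).symm
  rw [hwt.numSPthru_eq, hwt.numSP_eq_one]
  split_ifs <;> simp

lemma eload_eq_one_div_degree (hsrc : ∀ t ∈ Vld, ∀ u, G.Adj t u → u ∈ Vsrc) {u v : V}
    (hu : u ∉ Vld) (hv : v ∈ Vld) (huv : G.Adj u v) :
    eload Vsrc Vld G s(u, v) = 1 / (G.degree v : ℝ) := by
  calc eload Vsrc Vld G s(u, v)
      = ∑ t ∈ Vld, ∑ w ∈ G.neighborFinset t,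
          if s(u, v) = s(w, t) then 1 / (G.degree t : ℝ) else 0 :=
        Finset.sum_congr rfl fun t ht => sum_nearestSources_load_eq (hsrc t ht) _
    _ = ∑ t ∈ Vld, if v = t then 1 / (G.degree t : ℝ) else 0 := by
        refine Finset.sum_congr rfl fun t ht => ?_
        split_ifs with hvt
        · subst hvt
          simp_rw [Sym2.congr_left]
          simp [Finset.sum_ite_eq, huv.symm]
        · refine Finset.sum_eq_zero fun w _ => if_neg fun huvwt => ?_
          rcases Sym2.eq_iff.mp huvwt with ⟨-, rfl⟩ | ⟨rfl, -⟩
          exacts [hvt rfl, hu ht]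
    _ = 1 / (G.degree v : ℝ) := by simp [hv]

end

theorem eload_eq_inv_degree_of_bipartite_general {V : Type*} [Fintype V] [DecidableEq V]
    (G0 : SimpleGraph V) (Vsrc Vld : Finset V)
    (hdisj : Vsrc ∩ Vld = ∅)
    (hedge : ∀ u v : V, G0.Adj u v →
      (u ∈ Vsrc ∧ v ∈ Vld) ∨ (u ∈ Vld ∧ v ∈ Vsrc)) :
    ∀ G : SimpleGraph V, G ≤ G0 → ∀ h s : V, h ∈ Vsrc → s ∈ Vld → G.Adj h s →
      eload Vsrc Vld G s(h, s) = 1 / (G.degree s : ℝ) := by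
  intro G hle h s hh hs hhs
  have hld : ∀ x ∈ Vld, x ∉ Vsrc := fun x hxld hxsrc =>
    Finset.notMem_empty x (hdisj ▸ Finset.mem_inter.mpr ⟨hxsrc, hxld⟩)
  have hsrc : ∀ t ∈ Vld, ∀ u, G.Adj t u → u ∈ Vsrc := fun t ht u htu =>
    (hedge t u (hle htu)).resolve_left (fun h' => hld t ht h'.1) |>.2
  exact eload_eq_one_div_degree hsrc (fun hhld => hld h hhld hh) hs hhs

/-- When `G₀` is bipartite with sides exactly `V_src` and `V_ld`, the load of any edge
`{h,s}` (with `h ∈ V_src`, `s ∈ V_ld`) of any subgraph `G` of `G₀` is `1/deg_G(s)`, where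
`s` is the load endpoint. -/
theorem eload_eq_inv_degree_of_bipartite {V : Type*} [Fintype V] [DecidableEq V]
    (G0 : SimpleGraph V) (Vsrc Vld : Finset V)
    (hunion : Vsrc ∪ Vld = Finset.univ) (hdisj : Vsrc ∩ Vld = ∅)
    (hedge : ∀ u v : V, G0.Adj u v →
      (u ∈ Vsrc ∧ v ∈ Vld) ∨ (u ∈ Vld ∧ v ∈ Vsrc)) :
    ∀ G : SimpleGraph V, G ≤ G0 → ∀ h s : V, h ∈ Vsrc → s ∈ Vld → G.Adj h s →
      eload Vsrc Vld G s(h, s) = 1 / (G.degree s : ℝ) :=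
  eload_eq_inv_degree_of_bipartite_general G0 Vsrc Vld hdisj hedge

end
end
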